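/- arXiv:1008.5264 — 10 statements merged into one kernel-verified Lean document; each statement's English description precedes it below -/
import Mathlib

section
/- Let $A$ be a finite subset of a group $G$ and let $k > 2$ be an integer. Then $|A_k|/|A| \leq (|A_3|/|A|)^{k-2}$, where $A_m$ denotes the set of products $g_1 g_2 \cdots g_m$ with each $g_i \in A \cup A^{-1} \cup \{1\}$. -/
/-!
With `S = A ∪ A⁻¹ ∪ {1}`, Ruzsa's triangle inequality applied to `S ^ n`, `A` and `S ^ 2` gives
`|S ^ (n + 2)| |A| ≤ |S ^ n A| |S ^ 2 A| ≤ |S ^ (n + 1)| |S ^ 3|`, since `S` is symmetric and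
contains `A`. Thus each extra factor of `S` multiplies the normalised size `|S ^ n| / |A|` by at
most `|S ^ 3| / |A|`, and iterating from `n = 3` gives the bound.
-/

open scoped Pointwise
open Finset

namespace Finset

variable {G : Type*} [Group G] [DecidableEq G] {S B : Finset G}

lemma card_pow_add_two_mul_card_le (hS : S⁻¹ = S) (hB : B ⊆ S) (n : ℕ) :
    #(S ^ (n + 2)) * #B ≤ #(S ^ (n + 1)) * #(S ^ 3) := by
  have hS₂ : (S ^ 2)⁻¹ = S ^ 2 := by rw [← inv_pow, hS]
  calc #(S ^ (n + 2)) * #B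
      = #(S ^ n * S ^ 2) * #B := by rw [pow_add]
    _ ≤ #(S ^ n * B) * #((S ^ 2)⁻¹ * B) := ruzsa_triangle_inequality_mul_mul_invMul _ _ _
    _ ≤ #(S ^ n * S) * #(S ^ 2 * S) := by rw [hS₂]; gcongr
    _ = #(S ^ (n + 1)) * #(S ^ 3) := by rw [← pow_succ, ← pow_succ]

lemma card_pow_add_two_div_card_le (hS : S⁻¹ = S) (hB : B ⊆ S) (n : ℕ) :
    (#(S ^ (n + 2)) : ℝ) / #B ≤ #(S ^ (n + 1)) / #B * (#(S ^ 3) / #B) := by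
  rcases (#B).eq_zero_or_pos with hB₀ | hB₀
  · simp [hB₀]
  rw [div_mul_div_comm, div_le_div_iff₀ (by positivity) (by positivity), ← mul_assoc]
  exact mul_le_mul_of_nonneg_right (mod_cast card_pow_add_two_mul_card_le hS hB n) (by positivity)

lemma card_pow_add_three_div_card_le (hS : S⁻¹ = S) (hB : B ⊆ S) (m : ℕ) :
    (#(S ^ (m + 3)) : ℝ) / #B ≤ (#(S ^ 3) / #B) ^ (m + 1) := by
  induction m with
  | zero => simp
  | succ m ih =>
    calc (#(S ^ (m + 1 + 3)) : ℝ) / #B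
        ≤ #(S ^ (m + 3)) / #B * (#(S ^ 3) / #B) := card_pow_add_two_div_card_le hS hB (m + 2)
      _ ≤ (#(S ^ 3) / #B) ^ (m + 1) * (#(S ^ 3) / #B) := by gcongr
      _ = (#(S ^ 3) / #B) ^ (m + 1 + 1) := (pow_succ _ _).symm

end Finset

theorem stmt_0_general {G : Type*} [Group G] (A : Set G) (hA : A.Finite)
    (k : ℕ) (hk : 2 < k) :
    (((A ∪ A⁻¹ ∪ {1} : Set G) ^ k).ncard : ℝ) / (A.ncard : ℝ) ≤
      ((((A ∪ A⁻¹ ∪ {1} : Set G) ^ 3).ncard : ℝ) / (A.ncard : ℝ)) ^ (k - 2) := by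
  classical
  lift A to Finset G using hA with B
  obtain ⟨m, rfl⟩ := Nat.exists_eq_add_of_le' hk
  have hS : (B ∪ B⁻¹ ∪ {1})⁻¹ = B ∪ B⁻¹ ∪ {1} := by
    ext x
    simp only [mem_inv', mem_union, mem_singleton, inv_inv, inv_eq_one]
    tauto
  have hB : B ⊆ B ∪ B⁻¹ ∪ {1} := subset_union_left.trans subset_union_left
  have h := card_pow_add_three_div_card_le hS hB m
  rw [show m + 1 + 2 - 2 = m + 1 by omega, show m + 1 + 2 = m + 3 by omega]
  simpa only [← coe_inv, ← coe_singleton, ← coe_union, ← coe_pow, Set.ncard_coe_finset] using h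

theorem stmt_0 {G : Type*} [Group G] (A : Set G) (hA : A.Finite) (hne : A.Nonempty)
    (k : ℕ) (hk : 2 < k) :
    (((A ∪ A⁻¹ ∪ {1} : Set G) ^ k).ncard : ℝ) / (A.ncard : ℝ) ≤
      ((((A ∪ A⁻¹ ∪ {1} : Set G) ^ 3).ncard : ℝ) / (A.ncard : ℝ)) ^ (k - 2) :=
  stmt_0_general A hA k hk
end

section
/- Let $A$ be a finite subset of a group $G$ and let $k > 2$ be an integer. Then $|A_3|/|A| \leq (3 |A \cdot A \cdot A|/|A|)^3$, where $A_3 = \{g_1 g_2 g_3 : g_i \in A \cup A^{-1} \cup \{1\}\}$ and $A \cdot A \cdot A = \{a b c : a, b, c \in A\}$. -/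
/-!
Write `K = |A³|/|A|` for the tripling constant. Every element of `A₃` lies in one of the 27 sets
`A^e * A^d * A^f` with `e, d, f ∈ {-1, 0, 1}`. Deleting the factors `A⁰ = {1}` and padding on the
right with copies of `A` only increases the size, so each of these sets is no larger than an
alternating product `A^{±1} * A^{±1} * A^{±1}`, and such products have size at most `K³|A|`
by the small tripling lemma. Hence `|A₃| ≤ 27 K³ |A| = (3K)³ |A|`.
-/

open scoped Pointwise

namespace Finset

variable {G : Type*} [Group G] [DecidableEq G] {A : Finset G} {K : ℝ} {e d f : ℤ}

lemma small_zpow_mul_zpow_mul_zpow_of_small_tripling (hA : #(A ^ 3) ≤ K * #A)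
    (he : |e| = 1) (hd : |d| = 1) (hf : |f| = 1) :
    #(A ^ e * A ^ d * A ^ f) ≤ K ^ 3 * #A := by
  have h := small_alternating_pow_of_small_tripling le_rfl hA ![e, d, f]
    (by intro i; fin_cases i <;> assumption)
  simpa [List.finRange_succ, mul_assoc] using h

lemma small_zpow_mul_zpow_of_small_tripling (hA₀ : A.Nonempty) (hA : #(A ^ 3) ≤ K * #A)
    (he : |e| = 1) (hd : |d| = 1) : #(A ^ e * A ^ d) ≤ K ^ 3 * #A := by
  calc (#(A ^ e * A ^ d) : ℝ) ≤ #(A ^ e * A ^ d * A ^ (1 : ℤ)) := by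
        exact_mod_cast card_le_card_mul_right (by simpa using hA₀)
    _ ≤ K ^ 3 * #A := small_zpow_mul_zpow_mul_zpow_of_small_tripling hA he hd (by simp)

lemma small_zpow_of_small_tripling (hA₀ : A.Nonempty) (hA : #(A ^ 3) ≤ K * #A)
    (he : |e| = 1) : #(A ^ e) ≤ K ^ 3 * #A := by
  calc (#(A ^ e) : ℝ) ≤ #(A ^ e * A ^ (1 : ℤ)) := by
        exact_mod_cast card_le_card_mul_right (by simpa using hA₀)
    _ ≤ K ^ 3 * #A := small_zpow_mul_zpow_of_small_tripling hA₀ hA he (by simp)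

lemma one_le_of_small_tripling (hA₀ : A.Nonempty) (hA : #(A ^ 3) ≤ K * #A) :
    1 ≤ K ^ 3 * #A := by
  calc (1 : ℝ) ≤ #A := by exact_mod_cast hA₀.card_pos
    _ = #(A ^ (1 : ℤ)) := by simp
    _ ≤ K ^ 3 * #A := small_zpow_of_small_tripling hA₀ hA (by simp)

lemma small_zpow_mul_zpow_mul_zpow_of_abs_le_one (hA₀ : A.Nonempty) (hA : #(A ^ 3) ≤ K * #A)
    (he : |e| ≤ 1) (hd : |d| ≤ 1) (hf : |f| ≤ 1) :
    #(A ^ e * A ^ d * A ^ f) ≤ K ^ 3 * #A := by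
  have zero_or_unit (n : ℤ) (hn : |n| ≤ 1) : n = 0 ∨ |n| = 1 := by
    rcases Int.abs_le_one_iff.1 hn with h | h | h <;> simp [h]
  rcases zero_or_unit e he with rfl | he <;> rcases zero_or_unit d hd with rfl | hd <;>
    rcases zero_or_unit f hf with rfl | hf <;>
    try simp only [zpow_zero, mul_one, one_mul, card_one, Nat.cast_one]
  · exact one_le_of_small_tripling hA₀ hA
  · exact small_zpow_of_small_tripling hA₀ hA hf
  · exact small_zpow_of_small_tripling hA₀ hA hd
  · exact small_zpow_mul_zpow_of_small_tripling hA₀ hA hd hf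
  · exact small_zpow_of_small_tripling hA₀ hA he
  · exact small_zpow_mul_zpow_of_small_tripling hA₀ hA he hf
  · exact small_zpow_mul_zpow_of_small_tripling hA₀ hA he hd
  · exact small_zpow_mul_zpow_mul_zpow_of_small_tripling hA he hd hf

lemma card_pow_three_le_of_subset_biUnion {ι : Type*} {B : Finset G} {S : Finset ι}
    {s : ι → Finset G} {M : ℝ} (hB : B ⊆ S.biUnion s)
    (hM : ∀ i ∈ S, ∀ j ∈ S, ∀ l ∈ S, #(s i * s j * s l) ≤ M) :
    #(B ^ 3) ≤ #S ^ 3 * M := by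
  have hcover : B ^ 3 ⊆ (S ×ˢ S ×ˢ S).biUnion fun p ↦ s p.1 * s p.2.1 * s p.2.2 := by
    intro x hx
    simp only [pow_succ, pow_zero, one_mul, mem_mul] at hx
    obtain ⟨_, ⟨a, ha, b, hb, rfl⟩, c, hc, rfl⟩ := hx
    obtain ⟨i, hi, hai⟩ := mem_biUnion.1 (hB ha)
    obtain ⟨j, hj, hbj⟩ := mem_biUnion.1 (hB hb)
    obtain ⟨l, hl, hcl⟩ := mem_biUnion.1 (hB hc)
    exact mem_biUnion.2 ⟨(i, j, l), by simp [hi, hj, hl], mul_mem_mul (mul_mem_mul hai hbj) hcl⟩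
  calc (#(B ^ 3) : ℝ)
      ≤ #((S ×ˢ S ×ˢ S).biUnion fun p ↦ s p.1 * s p.2.1 * s p.2.2) := by
        exact_mod_cast card_le_card hcover
    _ ≤ ∑ p ∈ S ×ˢ S ×ˢ S, (#(s p.1 * s p.2.1 * s p.2.2) : ℝ) := by
        exact_mod_cast card_biUnion_le
    _ ≤ ∑ _p ∈ S ×ˢ S ×ˢ S, M := by
        refine sum_le_sum fun p hp ↦ ?_
        simp only [mem_product] at hp
        exact hM _ hp.1 _ hp.2.1 _ hp.2.2
    _ = #S ^ 3 * M := by simp only [sum_const, card_product, nsmul_eq_mul]; push_cast; ring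

lemma card_union_inv_union_one_pow_three_le (hA₀ : A.Nonempty) :
    #((A ∪ A⁻¹ ∪ 1) ^ 3) ≤ 27 * (#(A ^ 3) / #A : ℝ) ^ 3 * #A := by
  have hA : #(A ^ 3) ≤ (#(A ^ 3) / #A : ℝ) * #A :=
    (div_mul_cancel₀ _ (by exact_mod_cast hA₀.card_pos.ne')).ge
  have hcover : A ∪ A⁻¹ ∪ 1 ⊆ (Icc (-1 : ℤ) 1).biUnion (A ^ ·) := by
    intro x hx
    simp only [mem_union, mem_one] at hx
    rcases hx with (hx | hx) | rfl
    · exact mem_biUnion.2 ⟨1, by simp, by simpa using hx⟩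
    · exact mem_biUnion.2 ⟨-1, by simp, by simpa using hx⟩
    · exact mem_biUnion.2 ⟨0, by simp, by simp⟩
  have h := card_pow_three_le_of_subset_biUnion hcover fun e he d hd f hf ↦
    small_zpow_mul_zpow_mul_zpow_of_abs_le_one hA₀ hA (abs_le.2 (mem_Icc.1 he))
      (abs_le.2 (mem_Icc.1 hd)) (abs_le.2 (mem_Icc.1 hf))
  have hS : #(Icc (-1 : ℤ) 1) = 3 := by simp
  rw [hS] at h
  exact h.trans_eq (by ring)

end Finset

open Finset

theorem stmt_1_general {G : Type*} [Group G] (A : Set G) (hA : A.Finite) (hne : A.Nonempty) :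
    (((A ∪ A⁻¹ ∪ {1} : Set G) ^ 3).ncard : ℝ) / (A.ncard : ℝ) ≤
      (3 * ((A * A * A).ncard : ℝ) / (A.ncard : ℝ)) ^ 3 := by
  classical
  lift A to Finset G using hA
  have hpos : (0 : ℝ) < #A := by exact_mod_cast (coe_nonempty.1 hne).card_pos
  have hB : ((A ∪ A⁻¹ ∪ {1} : Set G) ^ 3) = ↑((A ∪ A⁻¹ ∪ 1) ^ 3) := by
    simp only [coe_pow, coe_union, coe_inv, coe_one, Set.singleton_one]
  have hAAA : (A * A * A : Set G) = ↑(A ^ 3) := by simp [pow_succ]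
  rw [hB, hAAA, Set.ncard_coe_finset, Set.ncard_coe_finset, Set.ncard_coe_finset,
    div_le_iff₀ hpos, mul_div_assoc, mul_pow]
  exact (card_union_inv_union_one_pow_three_le (coe_nonempty.1 hne)).trans_eq
    (by norm_num)

theorem stmt_1 {G : Type*} [Group G] (A : Set G) (hA : A.Finite) (hne : A.Nonempty)
    (k : ℕ) (hk : 2 < k) :
    (((A ∪ A⁻¹ ∪ {1} : Set G) ^ 3).ncard : ℝ) / (A.ncard : ℝ) ≤
      (3 * ((A * A * A).ncard : ℝ) / (A.ncard : ℝ)) ^ 3 :=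
  stmt_1_general A hA hne
end

section
/- Let $A$ be a generating set of a finite group $G$ with $1 \in A$, and let $B \subseteq G$ be nonempty. Then $|AB| \geq \min(|B| + \frac{1}{2}|A|, |G|)$. -/
open scoped Pointwise

/-!
Hamidoune's isoperimetric method. Let `κ(S)` be the minimum of `|SX| - |X|` over nonempty `X`
with `SX ≠ G`; then `|AB| ≥ |B| + κ(A)` unless `AB = G`, so it suffices that `2κ(S) ≥ |S|` for a
generating set `S ∋ 1`. Minimizers ("fragments") are preserved by right translation, two
intersecting fragments whose union `U` has `SU ≠ G` intersect in a fragment, and `X ↦ (SX)ᶜ`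
sends fragments of `S` to fragments of `S⁻¹`, so `κ(S⁻¹) = κ(S)`.

Take a fragment `H ∋ 1` of least size (an atom). If `Hh = H` for all `h ∈ H`, then `H` is a
subgroup, some `s ∈ S` lies outside it, and `|SH| ≥ |sH ∪ H| = 2|H|` together with `|SH| ≥ |S|`
gives `2κ(S) ≥ |S|`. Otherwise `H` meets a different translate `Hh`, minimality forces
`S(H ∪ Hh) = G`, and counting in the complement gives `|G| < κ(S) + 2|H|`. If this second case
occurs both for `S` and for `S⁻¹`, the atom of `S⁻¹` is no larger than the fragment `(SH)ᶜ`,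
and the two bounds contradict each other.
-/

open Finset

namespace Hamidoune

variable {G : Type*} [Group G] [DecidableEq G]

lemma exists_subgroup_coe_eq {H : Finset G} (h1 : (1 : G) ∈ H)
    (hH : ∀ h ∈ H, H * {h} = H) : ∃ K : Subgroup G, (K : Set G) = H := by
  refine ⟨{ carrier := H, one_mem' := h1, mul_mem' := ?_, inv_mem' := ?_ }, rfl⟩
  · intro a b ha hb
    have := mul_mem_mul ha (mem_singleton_self b)
    rwa [hH b hb] at this
  · intro a ha
    have : (1 : G) ∈ H * {a} := by rw [hH a ha]; exact h1
    obtain ⟨b, hb, c, hc, hbc⟩ := mem_mul.1 this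
    rw [mem_singleton] at hc
    subst hc
    rwa [inv_eq_of_mul_eq_one_left hbc]

lemma two_mul_card_le_card_mul {S H : Finset G} {K : Subgroup G} (hK : (K : Set G) = H)
    (h1 : (1 : G) ∈ S) {s : G} (hs : s ∈ S) (hsK : s ∉ K) : 2 * H.card ≤ (S * H).card := by
  have hdisj : Disjoint ({s} * H) H := by
    rw [disjoint_left]
    intro z hz hzH
    rw [singleton_mul] at hz
    obtain ⟨k, hk, rfl⟩ := mem_smul_finset.1 hz
    rw [← mem_coe, ← hK] at hk hzH
    exact hsK (by simpa using K.mul_mem hzH (K.inv_mem hk))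
  have hsub : {s} * H ∪ H ⊆ S * H :=
    union_subset (mul_subset_mul_right (singleton_subset_iff.2 hs)) (subset_mul_right H h1)
  have := card_le_card hsub
  rw [card_union_of_disjoint hdisj, card_singleton_mul] at this
  omega

variable [Fintype G]

def admissibleSets (S : Finset G) : Finset (Finset G) :=
  {X | X.Nonempty ∧ S * X ≠ univ}

lemma mem_admissibleSets {S X : Finset G} :
    X ∈ admissibleSets S ↔ X.Nonempty ∧ S * X ≠ univ := by
  simp [admissibleSets]

/-- Hamidoune's connectivity `κ(S) = min {|SX| - |X| : X ≠ ∅, SX ≠ G}`; junk value `0` when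
`S = G`, where no such `X` exists. -/
def connectivity (S : Finset G) : ℤ :=
  if h : (admissibleSets S).Nonempty then
    (admissibleSets S).inf' h fun X => ((S * X).card : ℤ) - X.card
  else 0

lemma connectivity_le {S X : Finset G} (hX : X ∈ admissibleSets S) :
    connectivity S ≤ ((S * X).card : ℤ) - X.card := by
  rw [connectivity, dif_pos ⟨X, hX⟩]
  exact inf'_le _ hX

def IsFragment (S X : Finset G) : Prop :=
  X ∈ admissibleSets S ∧ ((S * X).card : ℤ) - X.card = connectivity S

def IsAtom (S H : Finset G) : Prop :=
  IsFragment S H ∧ ∀ X, IsFragment S X → H.card ≤ X.card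

lemma one_mem_admissibleSets {S : Finset G} (hS : S ≠ univ) : {1} ∈ admissibleSets S :=
  mem_admissibleSets.2 ⟨singleton_nonempty 1, by rwa [singleton_one, mul_one]⟩

lemma exists_isFragment {S : Finset G} (hS : S ≠ univ) : ∃ X, IsFragment S X := by
  have hne : (admissibleSets S).Nonempty := ⟨_, one_mem_admissibleSets hS⟩
  obtain ⟨X, hX, hmin⟩ := exists_mem_eq_inf' hne fun X => ((S * X).card : ℤ) - X.card
  exact ⟨X, hX, by rw [connectivity, dif_pos hne, hmin]⟩

lemma IsFragment.mul_singleton {S X : Finset G} (hX : IsFragment S X) (g : G) :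
    IsFragment S (X * {g}) := by
  obtain ⟨hadm, hval⟩ := hX
  obtain ⟨hne, hU⟩ := mem_admissibleSets.1 hadm
  have hSX : S * (X * {g}) = S * X * {g} := (mul_assoc _ _ _).symm
  refine ⟨mem_admissibleSets.2 ⟨hne.mul (singleton_nonempty g), fun h => hU ?_⟩, ?_⟩
  · apply eq_univ_of_card
    rw [← card_mul_singleton (S * X) g, ← hSX, h, card_univ]
  · rwa [hSX, card_mul_singleton, card_mul_singleton]

lemma exists_isAtom_one_mem {S : Finset G} (hS : S ≠ univ) :
    ∃ H, IsAtom S H ∧ (1 : G) ∈ H := by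
  classical
  obtain ⟨X, hX⟩ := exists_isFragment hS
  obtain ⟨H, hH, hmin⟩ := exists_min_image {X | IsFragment S X} card ⟨X, by simpa using hX⟩
  simp only [mem_filter, mem_univ, true_and] at hH hmin
  obtain ⟨x, hx⟩ := (mem_admissibleSets.1 hH.1).1
  refine ⟨H * {x⁻¹}, ⟨hH.mul_singleton _, fun Y hY => ?_⟩, ?_⟩
  · rw [card_mul_singleton]
    exact hmin Y hY
  · simpa using mul_mem_mul hx (mem_singleton_self x⁻¹)

lemma inv_mul_compl_mul_subset_compl (S T : Finset G) : S⁻¹ * (S * T)ᶜ ⊆ Tᶜ := by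
  rintro _ hz
  obtain ⟨a, ha, y, hy, rfl⟩ := mem_mul.1 hz
  rw [mem_compl] at hy ⊢
  intro hT
  apply hy
  simpa using mul_mem_mul (mem_inv'.1 ha) hT

lemma compl_mul_mem_admissibleSets_inv {S X : Finset G} (hX : X ∈ admissibleSets S) :
    (S * X)ᶜ ∈ admissibleSets S⁻¹ := by
  obtain ⟨⟨x, hx⟩, hU⟩ := mem_admissibleSets.1 hX
  have hne : (S * X)ᶜ.Nonempty := nonempty_iff_ne_empty.2 (by rwa [Ne, compl_eq_empty_iff])
  refine mem_admissibleSets.2 ⟨hne, fun h => ?_⟩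
  have := inv_mul_compl_mul_subset_compl S X (h ▸ mem_univ x)
  exact mem_compl.1 this hx

lemma card_inv_mul_compl_mul_sub_le {S X : Finset G} :
    ((S⁻¹ * (S * X)ᶜ).card : ℤ) - (S * X)ᶜ.card ≤ ((S * X).card : ℤ) - X.card := by
  have h1 := card_le_card (inv_mul_compl_mul_subset_compl S X)
  have h2 := card_compl_add_card X
  have h3 := card_compl_add_card (S * X)
  omega

lemma connectivity_inv_le {S : Finset G} (hS : S ≠ univ) :
    connectivity S⁻¹ ≤ connectivity S := by
  obtain ⟨X, hadm, hval⟩ := exists_isFragment hS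
  calc connectivity S⁻¹ ≤ ((S⁻¹ * (S * X)ᶜ).card : ℤ) - (S * X)ᶜ.card :=
        connectivity_le (compl_mul_mem_admissibleSets_inv hadm)
    _ ≤ ((S * X).card : ℤ) - X.card := card_inv_mul_compl_mul_sub_le
    _ = connectivity S := hval

lemma inv_ne_univ {S : Finset G} (hS : S ≠ univ) : S⁻¹ ≠ univ := by
  rwa [Ne, ← inv_inj, inv_univ, inv_inv]

lemma connectivity_inv {S : Finset G} (hS : S ≠ univ) : connectivity S⁻¹ = connectivity S :=
  le_antisymm (connectivity_inv_le hS) (by simpa using connectivity_inv_le (inv_ne_univ hS))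

lemma IsFragment.compl_mul {S X : Finset G} (hS : S ≠ univ) (hX : IsFragment S X) :
    IsFragment S⁻¹ (S * X)ᶜ := by
  have hadm := compl_mul_mem_admissibleSets_inv hX.1
  refine ⟨hadm, le_antisymm ?_ (connectivity_le hadm)⟩
  rw [connectivity_inv hS, ← hX.2]
  exact card_inv_mul_compl_mul_sub_le

lemma IsFragment.inter {S X Y : Finset G} (hX : IsFragment S X) (hY : IsFragment S Y)
    (hne : (X ∩ Y).Nonempty) (hU : S * (X ∪ Y) ≠ univ) : IsFragment S (X ∩ Y) := by
  have hSX := (mem_admissibleSets.1 hX.1).2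
  have hinter : X ∩ Y ∈ admissibleSets S :=
    mem_admissibleSets.2 ⟨hne, fun h => hSX <| univ_subset_iff.1 <|
      h ▸ mul_subset_mul_left inter_subset_left⟩
  have hunion : X ∪ Y ∈ admissibleSets S :=
    mem_admissibleSets.2 ⟨hne.mono (inter_subset_left.trans subset_union_left), hU⟩
  have h1 := connectivity_le hunion
  have h2 : (S * (X ∩ Y)).card ≤ (S * X ∩ (S * Y)).card :=
    card_le_card (subset_inter (mul_subset_mul_left inter_subset_left)
      (mul_subset_mul_left inter_subset_right))
  have h3 := card_inter_add_card_union (S * X) (S * Y)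
  have h4 := card_inter_add_card_union X Y
  have h5 := hX.2
  have h6 := hY.2
  rw [mul_union] at h1
  exact ⟨hinter, le_antisymm (by omega) (connectivity_le hinter)⟩

/-- The complements of `SX` and `SY` are disjoint, and their union is admissible for `S⁻¹`
with image avoiding `X ∩ Y`. -/
lemma IsFragment.card_add_card_inter_le {S X Y : Finset G} (hS : S ≠ univ)
    (hX : IsFragment S X) (hY : IsFragment S Y) (hne : (X ∩ Y).Nonempty)
    (hU : S * (X ∪ Y) = univ) :
    (Fintype.card G : ℤ) + (X ∩ Y).card ≤ connectivity S + X.card + Y.card := by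
  set W := (S * X)ᶜ ∪ (S * Y)ᶜ
  have hdisj : Disjoint (S * X)ᶜ (S * Y)ᶜ := by
    rw [disjoint_iff_inter_eq_empty, ← compl_union, ← mul_union, hU, compl_univ]
  have hWsub : S⁻¹ * W ⊆ (X ∩ Y)ᶜ := by
    rw [mul_union, compl_inter]
    exact union_subset_union (inv_mul_compl_mul_subset_compl S X)
      (inv_mul_compl_mul_subset_compl S Y)
  have hW : W ∈ admissibleSets S⁻¹ := by
    obtain ⟨z, hz⟩ := hne
    refine mem_admissibleSets.2 ⟨?_, fun h => mem_compl.1 (hWsub (h ▸ mem_univ z)) hz⟩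
    exact (compl_mul_mem_admissibleSets_inv hX.1 |> mem_admissibleSets.1).1.mono
      subset_union_left
  have h1 := connectivity_le hW
  rw [connectivity_inv hS, card_union_of_disjoint hdisj] at h1
  have h2 := card_le_card hWsub
  have h3 := card_compl_add_card (S * X)
  have h4 := card_compl_add_card (S * Y)
  have h5 := card_compl_add_card (X ∩ Y)
  have h6 := hX.2
  have h7 := hY.2
  omega

lemma IsAtom.eq_of_inter_nonempty {S H X : Finset G} (hH : IsAtom S H) (hX : IsFragment S X)
    (hcard : X.card = H.card) (hne : (H ∩ X).Nonempty) (hU : S * (H ∪ X) ≠ univ) : H = X := by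
  have hle := hH.2 _ (hH.1.inter hX hne hU)
  have hHX : H ⊆ X := by
    rw [← eq_of_subset_of_card_le inter_subset_left hle]
    exact inter_subset_right
  exact eq_of_subset_of_card_le hHX hcard.le

lemma IsFragment.card_le_two_mul_connectivity_of_coe_eq {S H : Finset G} {K : Subgroup G}
    (h1 : (1 : G) ∈ S) (hgen : Subgroup.closure (S : Set G) = ⊤) (hH : IsFragment S H)
    (hK : (K : Set G) = H) : (S.card : ℤ) ≤ 2 * connectivity S := by
  obtain ⟨hne, hU⟩ := mem_admissibleSets.1 hH.1
  have hSK : ¬ (S : Set G) ⊆ K := fun hSK => by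
    have hKtop : K = ⊤ := top_le_iff.1 (hgen ▸ (Subgroup.closure_le K).2 hSK)
    have hHuniv : H = univ := by
      rw [← coe_inj, ← hK, hKtop, coe_univ, Subgroup.coe_top]
    exact hU (by rw [hHuniv, mul_univ_of_one_mem h1])
  obtain ⟨s, hs, hsK⟩ := Set.not_subset.1 hSK
  have h2 := two_mul_card_le_card_mul hK h1 hs hsK
  have h3 : S.card ≤ (S * H).card := card_le_card_mul_right hne
  have h4 := hH.2
  omega

lemma card_le_two_mul_connectivity_or_exists_isAtom {S : Finset G} (h1 : (1 : G) ∈ S)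
    (hgen : Subgroup.closure (S : Set G) = ⊤) (hS : S ≠ univ) :
    (S.card : ℤ) ≤ 2 * connectivity S ∨
      ∃ H, IsAtom S H ∧ (Fintype.card G : ℤ) + 1 ≤ connectivity S + 2 * H.card := by
  obtain ⟨H, hH, h1H⟩ := exists_isAtom_one_mem hS
  by_cases hstab : ∀ h ∈ H, H * {h} = H
  · obtain ⟨K, hK⟩ := exists_subgroup_coe_eq h1H hstab
    exact Or.inl (hH.1.card_le_two_mul_connectivity_of_coe_eq h1 hgen hK)
  obtain ⟨h, hh, hHh⟩ := not_forall₂.1 hstab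
  have hX := hH.1.mul_singleton h
  have hne : (H ∩ (H * {h})).Nonempty :=
    ⟨h, mem_inter.2 ⟨hh, by simpa using mul_mem_mul h1H (mem_singleton_self h)⟩⟩
  have hU : S * (H ∪ H * {h}) = univ := by
    by_contra hU
    exact hHh (hH.eq_of_inter_nonempty hX (card_mul_singleton H h) hne hU).symm
  have hbound := hH.1.card_add_card_inter_le hS hX hne hU
  rw [card_mul_singleton] at hbound
  have := hne.card_pos
  exact Or.inr ⟨H, hH, by omega⟩

theorem card_le_two_mul_connectivity {S : Finset G} (h1 : (1 : G) ∈ S)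
    (hgen : Subgroup.closure (S : Set G) = ⊤) (hS : S ≠ univ) :
    (S.card : ℤ) ≤ 2 * connectivity S := by
  have h1' : (1 : G) ∈ S⁻¹ := by simpa using h1
  have hgen' : Subgroup.closure ((S⁻¹ : Finset G) : Set G) = ⊤ := by
    rwa [coe_inv, Subgroup.closure_inv]
  obtain hle | ⟨H, hH, hHbound⟩ :=
    card_le_two_mul_connectivity_or_exists_isAtom h1 hgen hS
  · exact hle
  obtain hle | ⟨H', hH', hH'bound⟩ :=
    card_le_two_mul_connectivity_or_exists_isAtom h1' hgen' (inv_ne_univ hS)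
  · rwa [card_inv, connectivity_inv hS] at hle
  have hH'le := hH'.2 _ (hH.1.compl_mul hS)
  have := card_compl_add_card (S * H)
  have := hH.1.2
  rw [connectivity_inv hS] at hH'bound
  omega

theorem mul_eq_univ_or_two_mul_card_add_card_le {A B : Finset G} (h1 : (1 : G) ∈ A)
    (hgen : Subgroup.closure (A : Set G) = ⊤) (hB : B.Nonempty) :
    A * B = univ ∨ 2 * B.card + A.card ≤ 2 * (A * B).card := by
  by_cases hU : A * B = univ
  · exact Or.inl hU
  have hA : A ≠ univ := by
    rintro rfl
    have := card_le_card_mul_right (s := univ) hB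
    rw [card_univ] at this
    exact hU (eq_univ_of_card _ (le_antisymm (card_le_univ _) this))
  have h2 := connectivity_le (mem_admissibleSets.2 ⟨hB, hU⟩)
  have h3 := card_le_two_mul_connectivity h1 hgen hA
  exact Or.inr (by omega)

end Hamidoune

theorem stmt_2 {G : Type*} [Group G] [Fintype G] (A B : Set G)
    (hgen : Subgroup.closure A = ⊤) (h1 : (1 : G) ∈ A) (hB : B.Nonempty) :
    ((A * B).ncard : ℝ) ≥ min ((B.ncard : ℝ) + (A.ncard : ℝ) / 2) (Fintype.card G : ℝ) := by
  classical
  simp only [Set.ncard_eq_toFinset_card', Set.toFinset_mul]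
  obtain hU | hle := Hamidoune.mul_eq_univ_or_two_mul_card_add_card_le (A := A.toFinset)
    (B := B.toFinset) (by simpa using h1) (by simpa using hgen) (by simpa using hB)
  · rw [hU, Finset.card_univ]
    exact min_le_right _ _
  · have : (2 * B.toFinset.card + A.toFinset.card : ℝ) ≤ 2 * (A.toFinset * B.toFinset).card := by
      exact_mod_cast hle
    exact (min_le_left _ _).trans (by linarith)
end

section
/- Let $A$ be a generating set of a finite group $G$ containing the identity. If $A \cdot A \cdot A \neq G$, then $|A \cdot A \cdot A| \geq 2|A|$. -/
open scoped Pointwise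
open Finset

namespace Stmt3Aux

variable {G : Type*} [Group G] [Fintype G] [DecidableEq G]

/-- minimal boundary increment over admissible sets -/
noncomputable def kap (B : Finset G) : ℕ :=
  sInf {k | ∃ X : Finset G, X.Nonempty ∧ X * B ≠ univ ∧ (X * B).card = X.card + k}

def IsFrag (B X : Finset G) : Prop :=
  X.Nonempty ∧ X * B ≠ univ ∧ (X * B).card = X.card + kap B

noncomputable def alp (B : Finset G) : ℕ := sInf {n | ∃ X, IsFrag B X ∧ X.card = n}

lemma kap_le (B X : Finset G) (h1 : (1:G) ∈ B) (hX : X.Nonempty) (hXU : X * B ≠ univ) :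
    X.card + kap B ≤ (X * B).card := by
  have hsub := card_le_card (subset_mul_left X h1)
  have : kap B ≤ (X * B).card - X.card := Nat.sInf_le ⟨X, hX, hXU, by omega⟩
  omega

lemma one_mem_inv (B : Finset G) (h1 : (1:G) ∈ B) : (1:G) ∈ B⁻¹ := by
  rw [mem_inv]; exact ⟨1, h1, inv_one⟩

lemma inv_ne_univ (B : Finset G) (hU : B ≠ univ) : B⁻¹ ≠ univ := by
  intro h
  apply hU
  apply eq_univ_of_card
  have : B⁻¹.card = Fintype.card G := by rw [h, card_univ]
  rw [card_inv] at this
  exact this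

lemma kap_spec (B : Finset G) (h1 : (1:G) ∈ B) (hU : B ≠ univ) :
    ∃ X : Finset G, IsFrag B X := by
  have hne : {k | ∃ X : Finset G, X.Nonempty ∧ X * B ≠ univ ∧ (X * B).card = X.card + k}.Nonempty := by
    refine ⟨B.card - 1, (1 : Finset G), ?_, ?_, ?_⟩
    · exact ⟨1, Finset.one_mem_one⟩
    · simpa using hU
    · have hB1 : (0:ℕ) < B.card := card_pos.2 ⟨1, h1⟩
      simp only [one_mul, Finset.card_one]
      omega
  obtain ⟨X, hX1, hX2, hX3⟩ := Nat.sInf_mem hne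
  exact ⟨X, hX1, hX2, hX3⟩

lemma alp_spec (B : Finset G) (h1 : (1:G) ∈ B) (hU : B ≠ univ) :
    ∃ X, IsFrag B X ∧ X.card = alp B := by
  obtain ⟨X, hX⟩ := kap_spec B h1 hU
  have hne : {n | ∃ X, IsFrag B X ∧ X.card = n}.Nonempty := ⟨X.card, X, hX, rfl⟩
  exact Nat.sInf_mem hne

lemma alp_le (B X : Finset G) (hX : IsFrag B X) : alp B ≤ X.card :=
  Nat.sInf_le ⟨X, hX, rfl⟩

lemma comp_mul_subset (B X : Finset G) : (univ \ (X * B)) * B⁻¹ ⊆ univ \ X := by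
  intro g hg
  rw [mem_mul] at hg
  obtain ⟨y, hy, c, hc, rfl⟩ := hg
  rw [mem_inv] at hc
  obtain ⟨b, hb, rfl⟩ := hc
  rw [mem_sdiff] at hy ⊢
  refine ⟨mem_univ _, fun hmem => hy.2 ?_⟩
  have : (y * b⁻¹) * b ∈ X * B := mul_mem_mul hmem hb
  simpa using this

lemma kap_inv_le (B : Finset G) (h1 : (1:G) ∈ B) (hU : B ≠ univ) : kap B⁻¹ ≤ kap B := by
  obtain ⟨X, hXne, hXU, hXcard⟩ := kap_spec B h1 hU
  have hYne : (univ \ (X * B)).Nonempty := by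
    rw [sdiff_nonempty]
    exact fun h => hXU (univ_subset_iff.1 h)
  have hsub := comp_mul_subset B X
  have hYU : (univ \ (X * B)) * B⁻¹ ≠ univ := by
    intro h
    obtain ⟨x, hx⟩ := hXne
    have hx2 : x ∈ univ \ X := hsub (by rw [h]; exact mem_univ x)
    rw [mem_sdiff] at hx2
    exact hx2.2 hx
  have hk := kap_le B⁻¹ (univ \ (X * B)) (one_mem_inv B h1) hYne hYU
  have hc1 : ((univ \ (X * B)) * B⁻¹).card ≤ (univ : Finset G).card - X.card := by
    have := card_le_card hsub
    rwa [card_sdiff_of_subset (Finset.subset_univ X)] at this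
  have hYcard : (univ \ (X * B)).card = (univ : Finset G).card - (X * B).card := card_sdiff_of_subset (Finset.subset_univ _)
  have hXB_le : (X * B).card ≤ (univ : Finset G).card := card_le_card (Finset.subset_univ _)
  have hX_le : X.card ≤ (X * B).card := card_le_card (subset_mul_left X h1)
  omega

lemma kap_inv_eq (B : Finset G) (h1 : (1:G) ∈ B) (hU : B ≠ univ) : kap B⁻¹ = kap B := by
  refine le_antisymm (kap_inv_le B h1 hU) ?_
  have := kap_inv_le B⁻¹ (one_mem_inv B h1) (inv_ne_univ B hU)
  rwa [inv_inv] at this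

lemma atom_inter_eq (B : Finset G) (h1 : (1:G) ∈ B) (hU : B ≠ univ)
    (hα : alp B ≤ alp B⁻¹) {X Y : Finset G}
    (hX : IsFrag B X) (hXc : X.card = alp B)
    (hY : IsFrag B Y) (hYc : Y.card = alp B)
    (hXY : (X ∩ Y).Nonempty) : X = Y := by
  obtain ⟨hXne, hXU, hXcard⟩ := hX
  obtain ⟨hYne, hYU, hYcard⟩ := hY
  have hinter : (X ∩ Y) * B ⊆ (X * B) ∩ (Y * B) := inter_mul_subset
  have hunion : (X ∪ Y) * B = (X * B) ∪ (Y * B) := union_mul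
  have hiU : (X ∩ Y) * B ≠ univ := by
    intro h
    apply hXU
    apply univ_subset_iff.1
    rw [← h]
    exact mul_subset_mul_right inter_subset_left
  have hki := kap_le B (X ∩ Y) h1 hXY hiU
  have hcards := card_inter_add_card_union X Y
  have hcardsB := card_inter_add_card_union (X * B) (Y * B)
  have hile : ((X ∩ Y) * B).card ≤ ((X * B) ∩ (Y * B)).card := card_le_card hinter
  by_cases hcase : (X ∪ Y) * B = univ
  · exfalso
    have hUcard : ((X * B) ∪ (Y * B)).card = (univ : Finset G).card := by rw [← hunion, hcase]
    have hkinv : kap B⁻¹ = kap B := kap_inv_eq B h1 hU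
    have hZne : (univ \ (X * B)).Nonempty := by
      rw [sdiff_nonempty]
      exact fun h => hXU (univ_subset_iff.1 h)
    have hsubZ := comp_mul_subset B X
    have hZU : (univ \ (X * B)) * B⁻¹ ≠ univ := by
      intro h
      obtain ⟨x, hx⟩ := hXne
      have hx2 : x ∈ univ \ X := hsubZ (by rw [h]; exact mem_univ x)
      rw [mem_sdiff] at hx2
      exact hx2.2 hx
    have hkZ := kap_le B⁻¹ (univ \ (X * B)) (one_mem_inv B h1) hZne hZU
    have hZle : ((univ \ (X * B)) * B⁻¹).card ≤ (univ : Finset G).card - X.card := by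
      have := card_le_card hsubZ
      rwa [card_sdiff_of_subset (Finset.subset_univ X)] at this
    have hZcard : (univ \ (X * B)).card = (univ : Finset G).card - (X * B).card := card_sdiff_of_subset (Finset.subset_univ _)
    have hXB_le : (X * B).card ≤ (univ : Finset G).card := card_le_card (Finset.subset_univ _)
    have hX_le : X.card ≤ (X * B).card := card_le_card (subset_mul_left X h1)
    have hZfrag : IsFrag B⁻¹ (univ \ (X * B)) := ⟨hZne, hZU, by omega⟩
    have halpZ := alp_le B⁻¹ _ hZfrag
    have hposi : 0 < (X ∩ Y).card := card_pos.2 hXY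
    omega
  · have hune : (X ∪ Y).Nonempty := hXne.mono subset_union_left
    have hkU := kap_le B (X ∪ Y) h1 hune hcase
    rw [hunion] at hkU
    have hieq : ((X ∩ Y) * B).card = (X ∩ Y).card + kap B := by
      have h2 : ((X * B) ∩ (Y * B)).card ≤ (X ∩ Y).card + kap B := by omega
      omega
    have hfrag : IsFrag B (X ∩ Y) := ⟨hXY, hiU, hieq⟩
    have halp := alp_le B _ hfrag
    have hle1 : (X ∩ Y).card ≤ X.card := card_le_card inter_subset_left
    have heq1 : X ∩ Y = X := eq_of_subset_of_card_le inter_subset_left (by omega)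
    have heq2 : X ∩ Y = Y := eq_of_subset_of_card_le inter_subset_right (by omega)
    rw [← heq1, heq2]

lemma frag_smul (B X : Finset G) (hX : IsFrag B X) (a : G) : IsFrag B (a • X) := by
  obtain ⟨hne, hXU, hcard⟩ := hX
  have hmul : (a • X) * B = a • (X * B) := smul_mul_assoc a X B
  refine ⟨hne.smul_finset, ?_, ?_⟩
  · intro h
    apply hXU
    apply eq_univ_of_card
    have : ((a • X) * B).card = Fintype.card G := by rw [h, card_univ]
    rw [hmul, card_smul_finset] at this
    exact this
  · rw [hmul, card_smul_finset, card_smul_finset, hcard]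

lemma card_le_two_kap (B : Finset G) (h1 : (1:G) ∈ B)
    (hgen : Subgroup.closure (B : Set G) = ⊤) (hU : B ≠ univ)
    (hα : alp B ≤ alp B⁻¹) : B.card ≤ 2 * kap B := by
  obtain ⟨X₀, hX₀, hX₀c⟩ := alp_spec B h1 hU
  obtain ⟨x, hx⟩ := hX₀.1
  set H : Finset G := x⁻¹ • X₀ with hH
  have hHfrag : IsFrag B H := frag_smul B X₀ hX₀ x⁻¹
  have hHc : H.card = alp B := by rw [hH, card_smul_finset, hX₀c]
  have h1H : (1:G) ∈ H := by
    rw [hH, mem_smul_finset]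
    exact ⟨x, hx, by simp⟩
  have hHU : H ≠ univ := by
    intro h
    apply hHfrag.2.1
    apply univ_subset_iff.1
    rw [← h]
    exact subset_mul_left H h1
  have key : ∀ h ∈ H, h • H = H := by
    intro h hh
    refine atom_inter_eq B h1 hU hα (frag_smul B H hHfrag h)
      (by rw [card_smul_finset, hHc]) hHfrag hHc ⟨h, mem_inter.2 ⟨?_, hh⟩⟩
    rw [mem_smul_finset]
    exact ⟨1, h1H, by simp⟩
  have hmulc : ∀ a ∈ H, ∀ b ∈ H, a * b ∈ H := by
    intro a ha b hb
    rw [← key a ha, mem_smul_finset]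
    exact ⟨b, hb, rfl⟩
  have hinvc : ∀ a ∈ H, a⁻¹ ∈ H := by
    intro a ha
    have h1' : (1:G) ∈ a • H := (key a ha).symm ▸ h1H
    rw [mem_smul_finset] at h1'
    obtain ⟨b, hb, hab⟩ := h1'
    have : b = a⁻¹ := eq_inv_of_mul_eq_one_right hab
    rwa [← this]
  have hBH : ∃ b ∈ B, b ∉ H := by
    by_contra hcon
    push_neg at hcon
    let H' : Subgroup G :=
      { carrier := (H : Set G)
        mul_mem' := fun ha hb => hmulc _ ha _ hb
        one_mem' := h1H
        inv_mem' := fun ha => hinvc _ ha }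
    have hle : Subgroup.closure (B : Set G) ≤ H' :=
      Subgroup.closure_le H' |>.2 (fun b hb => hcon b hb)
    rw [hgen] at hle
    apply hHU
    apply eq_univ_iff_forall.2
    intro g
    exact hle (Subgroup.mem_top g)
  obtain ⟨b, hb, hbH⟩ := hBH
  have hdisj : Disjoint H (H * {b}) := by
    rw [disjoint_left]
    intro a ha hab
    rw [mem_mul] at hab
    obtain ⟨h', hh', c, hc, rfl⟩ := hab
    rw [mem_singleton] at hc
    apply hbH
    rw [← hc]
    have : h'⁻¹ * (h' * c) ∈ H := hmulc _ (hinvc _ hh') _ ha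
    simpa using this
  have hsubU : H ∪ H * {b} ⊆ H * B :=
    union_subset (subset_mul_left H h1)
      (mul_subset_mul_left (singleton_subset_iff.2 hb))
  have hcard2 : 2 * H.card ≤ (H * B).card := by
    have hc := card_le_card hsubU
    have hcs : (H * {b}).card = H.card := by
      rw [mul_singleton]
      exact card_image_of_injective _ (mul_left_injective b)
    rw [card_union_of_disjoint hdisj, hcs] at hc
    omega
  have hBsub : B.card ≤ (H * B).card := by
    apply card_le_card
    intro y hy
    have : (1:G) * y ∈ H * B := mul_mem_mul h1H hy
    simpa using this
  have hfragc : (H * B).card = H.card + kap B := hHfrag.2.2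
  omega

lemma main (B : Finset G) (h1 : (1:G) ∈ B) (hgen : Subgroup.closure (B : Set G) = ⊤)
    (hne : B * B * B ≠ univ) : 2 * B.card ≤ (B * B * B).card := by
  have hBne : B.Nonempty := ⟨1, h1⟩
  have hBU : B ≠ univ := by
    intro h
    apply hne
    rw [h, univ_mul_univ, univ_mul_univ]
  have hB2U : B * B ≠ univ := by
    intro h
    apply hne
    rw [h]
    apply univ_subset_iff.1
    intro g _
    have : g * 1 ∈ univ * B := mul_mem_mul (mem_univ g) h1
    simpa using this
  have hkey : B.card ≤ 2 * kap B := by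
    rcases le_total (alp B) (alp B⁻¹) with hα | hα
    · exact card_le_two_kap B h1 hgen hBU hα
    · have h1' : (1:G) ∈ B⁻¹ := one_mem_inv B h1
      have hgen' : Subgroup.closure ((B⁻¹ : Finset G) : Set G) = ⊤ := by
        rw [coe_inv, Subgroup.closure_inv, hgen]
      have hU' := inv_ne_univ B hBU
      have hα' : alp B⁻¹ ≤ alp B⁻¹⁻¹ := by rwa [inv_inv]
      have hres := card_le_two_kap B⁻¹ h1' hgen' hU' hα'
      rwa [card_inv, kap_inv_eq B h1 hBU] at hres
  have h3 := kap_le B (B * B) h1 (hBne.mul hBne) hne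
  have h2 := kap_le B B h1 hBne hB2U
  omega

end Stmt3Aux

theorem stmt_3 {G : Type*} [Group G] [Fintype G] (A : Set G)
    (hgen : Subgroup.closure A = ⊤) (h1 : (1 : G) ∈ A)
    (hne : A * A * A ≠ Set.univ) :
    (A * A * A).ncard ≥ 2 * A.ncard := by
  classical
  set B := A.toFinite.toFinset with hB
  have hBA : (B : Set G) = A := A.toFinite.coe_toFinset
  have hco : ((B * B * B : Finset G) : Set G) = A * A * A := by
    rw [Finset.coe_mul, Finset.coe_mul, hBA]
  have h1B : (1:G) ∈ B := by rw [hB, Set.Finite.mem_toFinset]; exact h1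
  have hgenB : Subgroup.closure (B : Set G) = ⊤ := by rw [hBA]; exact hgen
  have hneB : B * B * B ≠ Finset.univ := by
    intro h
    apply hne
    rw [← hco, h, Finset.coe_univ]
  have hmain := Stmt3Aux.main B h1B hgenB hneB
  have e1 : (A * A * A).ncard = (B * B * B).card := by
    rw [← hco, Set.ncard_coe_finset]
  have e2 : A.ncard = B.card := by rw [← hBA, Set.ncard_coe_finset]
  omega
end

section
/- Let $H \leq G$ be groups and $A, B \subseteq G$ nonempty finite sets. If $l$ is the number of left cosets of $H$ intersecting $A$, then $|A \cdot B| \geq l \cdot |B \cap H|$. -/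
open scoped Pointwise

theorem stmt_4 {G : Type*} [Group G] (H : Subgroup G) (A B : Set G)
    (hA : A.Finite) (hB : B.Finite) (hAne : A.Nonempty) (hBne : B.Nonempty) :
    (A * B).ncard ≥ ((QuotientGroup.mk : G → G ⧸ H) '' A).ncard * (B ∩ (H : Set G)).ncard := by
  classical
  set Q : Set (G ⧸ H) := (QuotientGroup.mk : G → G ⧸ H) '' A with hQ
  -- choose a representative in A for each coset in Q
  have hrep : ∀ q ∈ Q, ∃ a ∈ A, (QuotientGroup.mk a : G ⧸ H) = q := by
    intro q hq; obtain ⟨a, ha, rfl⟩ := hq; exact ⟨a, ha, rfl⟩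
  choose rep hrepA hrepq using hrep
  -- map from Q ×ˢ (B ∩ H) into A * B
  have key : (Q ×ˢ (B ∩ (H : Set G))).ncard ≤ (A * B).ncard := by
    apply Set.ncard_le_ncard_of_injOn (fun p => (if h : p.1 ∈ Q then rep p.1 h else 1) * p.2)
      ?_ ?_ (hA.mul hB)
    · rintro ⟨q, b⟩ ⟨hq, hb, -⟩
      simp only [dif_pos hq]
      exact Set.mul_mem_mul (hrepA q hq) hb
    · rintro ⟨q1, b1⟩ ⟨hq1, hb1, hH1⟩ ⟨q2, b2⟩ ⟨hq2, hb2, hH2⟩ heq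
      simp only [dif_pos hq1, dif_pos hq2] at heq
      have hqeq : q1 = q2 := by
        calc q1 = QuotientGroup.mk (rep q1 hq1 * b1) := by
                rw [QuotientGroup.mk_mul_of_mem _ hH1, hrepq]
          _ = QuotientGroup.mk (rep q2 hq2 * b2) := by rw [heq]
          _ = q2 := by rw [QuotientGroup.mk_mul_of_mem _ hH2, hrepq]
      subst hqeq
      have : b1 = b2 := mul_left_cancel heq
      simp [this]
  refine le_trans (le_of_eq ?_) key
  rw [← Nat.card_coe_set_eq, ← Nat.card_coe_set_eq, ← Nat.card_coe_set_eq,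
    Nat.card_congr (Equiv.Set.prod Q (B ∩ (H : Set G))), Nat.card_prod]
end

section
/- Let $G$ be a group, $H$ a subgroup, and $A \subseteq G$ a nonempty finite set. If $l$ is the number of left cosets of $H$ intersecting $A$, then $|A^{-1} A \cap H| \geq |A| / l$. -/
/-! For `a ∈ A`, left translation by `a⁻¹` injects the part of `A` lying in the coset `aH` into
`A⁻¹A ∩ H`; summing over the `l` cosets that meet `A` gives `|A| ≤ l · |A⁻¹A ∩ H|`. -/

open scoped Pointwise

theorem Set.ncard_le_mul_ncard_image {α β : Type*} {s : Set α} (hs : s.Finite) (f : α → β)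
    (n : ℕ) (hn : ∀ b ∈ f '' s, {a ∈ s | f a = b}.ncard ≤ n) : s.ncard ≤ n * (f '' s).ncard := by
  classical
  lift s to Finset α using hs
  rw [← Finset.coe_image, Set.ncard_coe_finset, Set.ncard_coe_finset]
  refine Finset.card_le_mul_card_image s n fun b hb ↦ ?_
  rw [← Set.ncard_coe_finset, Finset.coe_filter]
  exact hn b (by rwa [← Finset.coe_image])

namespace Subgroup

variable {G : Type*} [Group G] (H : Subgroup G) {A : Set G}

theorem inv_mul_mem_inv_mul_inter {a x : G} (ha : a ∈ A) (hx : x ∈ A)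
    (hax : (x : G ⧸ H) = a) : a⁻¹ * x ∈ A⁻¹ * A ∩ (H : Set G) :=
  ⟨Set.mul_mem_mul (Set.inv_mem_inv.mpr ha) hx, QuotientGroup.eq.mp hax.symm⟩

theorem ncard_inter_coset_le (hA : A.Finite) {a : G} (ha : a ∈ A) :
    {x ∈ A | (x : G ⧸ H) = a}.ncard ≤ (A⁻¹ * A ∩ (H : Set G)).ncard :=
  Set.ncard_le_ncard_of_injOn (a⁻¹ * ·)
    (fun _ hx ↦ inv_mul_mem_inv_mul_inter H ha hx.1 hx.2)
    (mul_right_injective a⁻¹).injOn ((hA.inv.mul hA).inter_of_left _)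

theorem ncard_le_ncard_image_mk_mul (hA : A.Finite) :
    A.ncard ≤ (A⁻¹ * A ∩ (H : Set G)).ncard * ((QuotientGroup.mk : G → G ⧸ H) '' A).ncard :=
  Set.ncard_le_mul_ncard_image hA _ _ fun _ ⟨_, ha, hab⟩ ↦
    hab ▸ ncard_inter_coset_le H hA ha

end Subgroup

theorem stmt_5_general {G : Type*} [Group G] (H : Subgroup G) (A : Set G)
    (hA : A.Finite) :
    ((A⁻¹ * A ∩ (H : Set G)).ncard : ℝ) ≥
      (A.ncard : ℝ) / (((QuotientGroup.mk : G → G ⧸ H) '' A).ncard : ℝ) :=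
  div_le_of_le_mul₀ (Nat.cast_nonneg _) (Nat.cast_nonneg _)
    (mod_cast H.ncard_le_ncard_image_mk_mul hA)

theorem stmt_5 {G : Type*} [Group G] (H : Subgroup G) (A : Set G)
    (hA : A.Finite) (hne : A.Nonempty) :
    ((A⁻¹ * A ∩ (H : Set G)).ncard : ℝ) ≥
      (A.ncard : ℝ) / (((QuotientGroup.mk : G → G ⧸ H) '' A).ncard : ℝ) :=
  stmt_5_general H A hA
end

section
/- Let $H \leq G$ and let $A \subseteq G$ be a nonempty finite set. Then for any integer $k \geq 2$, $|A_{k+1}| \geq \frac{|A_k \cap H|}{|A^{-1}A \cap H|} \cdot |A|$. -/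
open scoped Pointwise

private lemma ncard_sprod {α β : Type*} (s : Set α) (t : Set β) :
    (s ×ˢ t).ncard = s.ncard * t.ncard := by
  rw [← Nat.card_coe_set_eq, ← Nat.card_coe_set_eq, ← Nat.card_coe_set_eq,
      Nat.card_congr (Equiv.Set.prod s t), Nat.card_prod]

private lemma aux_card {G : Type*} [Group G] (A S : Set G) (hA : A.Finite) (hS : S.Finite) :
    A.ncard * S.ncard ≤ (A * S).ncard * ((A⁻¹ * A) ∩ (S * S⁻¹)).ncard := by
  classical
  have hex : ∀ g ∈ A * S, ∃ p : G × G, p.1 ∈ A ∧ p.2 ∈ S ∧ p.1 * p.2 = g := by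
    intro g hg
    rw [Set.mem_mul] at hg
    obtain ⟨a, ha, s, hs, h⟩ := hg
    exact ⟨(a, s), ha, hs, h⟩
  set r : G → G × G := fun g =>
    if h : ∃ p : G × G, p.1 ∈ A ∧ p.2 ∈ S ∧ p.1 * p.2 = g then h.choose else 1 with hr
  have hrprop : ∀ g ∈ A * S, (r g).1 ∈ A ∧ (r g).2 ∈ S ∧ (r g).1 * (r g).2 = g := by
    intro g hg
    have h := hex g hg
    simp only [hr, dif_pos h]
    exact h.choose_spec
  set f : G × G → G × G := fun p => (p.1 * p.2, (r (p.1 * p.2)).1⁻¹ * p.1) with hf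
  have hmaps : ∀ p ∈ A ×ˢ S, f p ∈ (A * S) ×ˢ ((A⁻¹ * A) ∩ (S * S⁻¹)) := by
    rintro ⟨a, s⟩ ⟨ha, hs⟩
    have hg : a * s ∈ A * S := Set.mul_mem_mul ha hs
    obtain ⟨h1, h2, h3⟩ := hrprop _ hg
    constructor
    · exact hg
    constructor
    · exact Set.mul_mem_mul (by rwa [Set.mem_inv, inv_inv]) ha
    · have heq : (r (a * s)).1⁻¹ * a = (r (a * s)).2 * s⁻¹ := by
        rw [inv_mul_eq_iff_eq_mul, ← mul_assoc, h3, mul_assoc, mul_inv_cancel, mul_one]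
      show (r (a * s)).1⁻¹ * a ∈ S * S⁻¹
      rw [heq]
      exact Set.mul_mem_mul h2 (by rwa [Set.mem_inv, inv_inv])
  have hinj : Set.InjOn f (A ×ˢ S) := by
    rintro ⟨a, s⟩ ⟨ha, hs⟩ ⟨a', s'⟩ ⟨ha', hs'⟩ heq
    simp only [hf, Prod.mk.injEq] at heq
    obtain ⟨h1, h2⟩ := heq
    rw [h1] at h2
    have ha2 : a = a' := mul_left_cancel h2
    subst ha2
    have : s = s' := mul_left_cancel h1
    subst this
    rfl
  have hfin : ((A * S) ×ˢ ((A⁻¹ * A) ∩ (S * S⁻¹))).Finite :=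
    (hA.mul hS).prod (((hA.inv.mul hA).inter_of_left _))
  calc A.ncard * S.ncard = (A ×ˢ S).ncard := (ncard_sprod A S).symm
    _ ≤ ((A * S) ×ˢ ((A⁻¹ * A) ∩ (S * S⁻¹))).ncard :=
        Set.ncard_le_ncard_of_injOn f hmaps hinj hfin
    _ = (A * S).ncard * ((A⁻¹ * A) ∩ (S * S⁻¹)).ncard := ncard_sprod _ _

theorem stmt_6 {G : Type*} [Group G] (H : Subgroup G) (A : Set G)
    (hA : A.Finite) (hne : A.Nonempty) (k : ℕ) (hk : 2 ≤ k) :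
    ((((A ∪ A⁻¹ ∪ {1} : Set G)) ^ (k + 1)).ncard : ℝ) ≥
      ((((A ∪ A⁻¹ ∪ {1} : Set G)) ^ k ∩ (H : Set G)).ncard : ℝ) /
        ((A⁻¹ * A ∩ (H : Set G)).ncard : ℝ) * (A.ncard : ℝ) := by
  set B : Set G := A ∪ A⁻¹ ∪ {1} with hBdef
  have hB : B.Finite := (hA.union hA.inv).union (Set.finite_singleton 1)
  have hBpow : ∀ n : ℕ, (B ^ n).Finite := by
    intro n
    induction n with
    | zero => simpa using Set.finite_singleton (1 : G)
    | succ n ih => rw [pow_succ]; exact ih.mul hB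
  set S : Set G := B ^ k ∩ (H : Set G) with hSdef
  have hSfin : S.Finite := (hBpow k).inter_of_left _
  have hDfin : (A⁻¹ * A ∩ (H : Set G)).Finite := (hA.inv.mul hA).inter_of_left _
  have hDne : (A⁻¹ * A ∩ (H : Set G)).Nonempty := by
    obtain ⟨a, ha⟩ := hne
    exact ⟨1, ⟨by rw [← inv_mul_cancel a]; exact Set.mul_mem_mul (by rwa [Set.mem_inv, inv_inv]) ha,
      H.one_mem⟩⟩
  have hdpos : (0 : ℝ) < ((A⁻¹ * A ∩ (H : Set G)).ncard : ℝ) := by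
    exact_mod_cast (Set.ncard_pos hDfin).mpr hDne
  rw [ge_iff_le, div_mul_eq_mul_div, div_le_iff₀ hdpos]
  have key : A.ncard * S.ncard ≤ (B ^ (k + 1)).ncard * (A⁻¹ * A ∩ (H : Set G)).ncard := by
    refine le_trans (aux_card A S hA hSfin) (Nat.mul_le_mul ?_ ?_)
    · apply Set.ncard_le_ncard _ (hBpow (k + 1))
      have hAB : A ⊆ B := fun x hx => Or.inl (Or.inl hx)
      have hSB : S ⊆ B ^ k := Set.inter_subset_left
      calc A * S ⊆ B * B ^ k := Set.mul_subset_mul hAB hSB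
        _ = B ^ (k + 1) := by rw [pow_succ']
    · apply Set.ncard_le_ncard _ hDfin
      apply Set.inter_subset_inter_right
      rintro x hx
      rw [Set.mem_mul] at hx
      obtain ⟨s, hs, t, ht, rfl⟩ := hx
      rw [Set.mem_inv] at ht
      exact H.mul_mem hs.2 (by simpa using H.inv_mem ht.2)
  calc ((S.ncard : ℝ) * (A.ncard : ℝ))
      = ((A.ncard * S.ncard : ℕ) : ℝ) := by push_cast; ring
    _ ≤ (((B ^ (k + 1)).ncard * (A⁻¹ * A ∩ (H : Set G)).ncard : ℕ) : ℝ) := by exact_mod_cast key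
    _ = ((B ^ (k + 1)).ncard : ℝ) * ((A⁻¹ * A ∩ (H : Set G)).ncard : ℝ) := by push_cast; ring
end

section
/- Let $H \trianglelefteq G$ with quotient map $\pi : G \to G/H$. Then for any finite nonempty subsets $A_1, A_2 \subseteq G$, $|(A_1 \cup A_2)_4| \geq \frac{|\pi(A_1 A_2)|}{|\pi(A_1)|} \cdot |A_1|$. -/
open scoped Pointwise

/-!
Let `B` be a largest fibre of `π` on `A₁`, so `|A₁| ≤ |π(A₁)| |B|`. Since `π` is constant on `B`,
multiplying `B` by one representative in `A₁ A₂` of each coset in `π(A₁ A₂)` gives `|π(A₁ A₂)| |B|`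
distinct elements of `A₁ A₂ A₁ ⊆ (A₁ ∪ A₂)_4`.
-/

namespace Set

theorem exists_ncard_le_ncard_image_mul_ncard_fiber {α β : Type*} [Nonempty β] (f : α → β)
    {A : Set α} (hA : A.Finite) : ∃ y, A.ncard ≤ (f '' A).ncard * (A ∩ f ⁻¹' {y}).ncard := by
  classical
  lift A to Finset α using hA with s
  rcases s.eq_empty_or_nonempty with rfl | hs
  · exact ⟨Classical.arbitrary β, by simp⟩
  obtain ⟨y, -, hy⟩ := Finset.exists_max_image (s.image f) (fun y ↦ (s.filter (f · = y)).card)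
    (hs.image f)
  have hfiber : ∀ z, ((s : Set α) ∩ f ⁻¹' {z}).ncard = (s.filter (f · = z)).card := fun z ↦ by
    rw [← ncard_coe_finset, Finset.coe_filter]; rfl
  refine ⟨y, ?_⟩
  rw [hfiber, ← Finset.coe_image, ncard_coe_finset, ncard_coe_finset, mul_comm]
  exact Finset.card_le_mul_card_image s _ hy

theorem ncard_image_mul_ncard_le_ncard_mul {G Q : Type*} [Group G] [Group Q] (f : G →* Q)
    {X B : Set G} (hX : X.Finite) (hB : B.Finite) {c : Q} (hBc : B ⊆ f ⁻¹' {c}) :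
    (f '' X).ncard * B.ncard ≤ (X * B).ncard := by
  obtain ⟨S, hSX, hS⟩ := exists_subset_bijOn X f
  rw [← hS.image_eq, hS.injOn.ncard_image, ← ncard_prod]
  refine ncard_le_ncard_of_injOn (fun p ↦ p.1 * p.2)
    (fun p hp ↦ mul_mem_mul (hSX hp.1) hp.2) ?_ (hX.mul hB)
  rintro ⟨x, b⟩ ⟨hx, hb⟩ ⟨x', b'⟩ ⟨hx', hb'⟩ (h : x * b = x' * b')
  have hfb : f b = f b' := (hBc hb).trans (hBc hb').symm
  have hxx' : x = x' := hS.injOn hx hx' <| mul_right_cancel <| by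
    rw [← map_mul, h, map_mul, hfb]
  subst hxx'
  rw [mul_left_cancel h]

theorem ncard_image_mul_ncard_le_ncard_image_mul_ncard_mul {G Q : Type*} [Group G] [Group Q]
    (f : G →* Q) {X A : Set G} (hX : X.Finite) (hA : A.Finite) :
    (f '' X).ncard * A.ncard ≤ (f '' A).ncard * (X * A).ncard := by
  obtain ⟨c, hfiber⟩ := exists_ncard_le_ncard_image_mul_ncard_fiber f hA
  set B := A ∩ f ⁻¹' {c}
  calc (f '' X).ncard * A.ncard ≤ (f '' X).ncard * ((f '' A).ncard * B.ncard) :=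
        Nat.mul_le_mul_left _ hfiber
    _ = (f '' A).ncard * ((f '' X).ncard * B.ncard) := by ring
    _ ≤ (f '' A).ncard * (X * B).ncard := Nat.mul_le_mul_left _ <|
        ncard_image_mul_ncard_le_ncard_mul f hX (hA.subset inter_subset_left) inter_subset_right
    _ ≤ (f '' A).ncard * (X * A).ncard := Nat.mul_le_mul_left _ <|
        ncard_le_ncard (mul_subset_mul_left inter_subset_left) (hX.mul hA)

end Set

theorem stmt_7_general {G : Type*} [Group G] (H : Subgroup G) [H.Normal] (A₁ A₂ : Set G)
    (hA₁ : A₁.Finite) (hA₂ : A₂.Finite) :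
    ((((A₁ ∪ A₂) ∪ (A₁ ∪ A₂)⁻¹ ∪ {1} : Set G) ^ 4).ncard : ℝ) ≥
      (((QuotientGroup.mk : G → G ⧸ H) '' (A₁ * A₂)).ncard : ℝ) /
        (((QuotientGroup.mk : G → G ⧸ H) '' A₁).ncard : ℝ) * (A₁.ncard : ℝ) := by
  set U : Set G := (A₁ ∪ A₂) ∪ (A₁ ∪ A₂)⁻¹ ∪ {1}
  set π : G → G ⧸ H := QuotientGroup.mk
  have hcover : (π '' (A₁ * A₂)).ncard * A₁.ncard ≤ (π '' A₁).ncard * (A₁ * A₂ * A₁).ncard :=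
    Set.ncard_image_mul_ncard_le_ncard_image_mul_ncard_mul (QuotientGroup.mk' H) (hA₁.mul hA₂) hA₁
  have hA₁U : A₁ ⊆ U := fun x hx ↦ by simp [U, hx]
  have hA₂U : A₂ ⊆ U := fun x hx ↦ by simp [U, hx]
  have hU : U.Finite := ((hA₁.union hA₂).union (hA₁.union hA₂).inv).union (Set.finite_singleton 1)
  have hU3 : U ^ 3 = U * U * U := by simp only [pow_succ, pow_zero, one_mul]
  have hU4 : U ^ 4 = U * U * U * U := by simp only [pow_succ, pow_zero, one_mul]
  have hsub : A₁ * A₂ * A₁ ⊆ U ^ 4 := by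
    refine subset_trans ?_ (Set.pow_subset_pow_right (m := 3) (by simp [U]) (by norm_num))
    rw [hU3]
    gcongr
  have hcount := Set.ncard_le_ncard hsub (hU4 ▸ ((hU.mul hU).mul hU).mul hU)
  rcases Nat.eq_zero_or_pos (π '' A₁).ncard with hM | hM
  · simp [hM]
  rw [ge_iff_le, div_mul_eq_mul_div, div_le_iff₀ (by exact_mod_cast hM)]
  exact_mod_cast (hcover.trans (Nat.mul_le_mul_left _ hcount)).trans_eq (mul_comm _ _)

theorem stmt_7 {G : Type*} [Group G] (H : Subgroup G) [H.Normal] (A₁ A₂ : Set G)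
    (hA₁ : A₁.Finite) (hA₂ : A₂.Finite) (hne₁ : A₁.Nonempty) (hne₂ : A₂.Nonempty) :
    ((((A₁ ∪ A₂) ∪ (A₁ ∪ A₂)⁻¹ ∪ {1} : Set G) ^ 4).ncard : ℝ) ≥
      (((QuotientGroup.mk : G → G ⧸ H) '' (A₁ * A₂)).ncard : ℝ) /
        (((QuotientGroup.mk : G → G ⧸ H) '' A₁).ncard : ℝ) * (A₁.ncard : ℝ) :=
  stmt_7_general H A₁ A₂ hA₁ hA₂
end

section
/- Let $G$ be a group, $A \subseteq G$, and $H < G$ a subgroup. Suppose the image of $A$ in $G/H$ equals all of $G/H$ (i.e., $AH = G$). Then $\langle A \rangle = A \cdot \langle A_3 \cap H \rangle$, where $A_3 = \{g_1 g_2 g_3 : g_i \in A \cup A^{-1} \cup \{1\}\}$. -/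
/-!
With `K = ⟨S ∩ H⟩`, the set `T = A * K` is stable under left multiplication by every
`x ∈ A ∪ A⁻¹`: writing `x * a = a' * h` with `a' ∈ A`, `h ∈ H` (possible since `A * H = G`),
the element `h = a'⁻¹ * x * a` lies in `S ∩ H ⊆ K`, so `x * a * k = a' * (h * k) ∈ T`.
Hence `⟨A⟩` stabilises `T`, and since `1 ∈ T` we get `⟨A⟩ ⊆ T`; the reverse inclusion holds
as soon as `S ⊆ ⟨A⟩`.
-/

open scoped Pointwise

namespace Subgroup

variable {G : Type*} [Group G]

theorem coe_closure_subset_of_smul_eq {A T : Set G} (hT : 1 ∈ T) (hA : ∀ a ∈ A, a • T = T) :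
    (closure A : Set G) ⊆ T := by
  intro g hg
  have hgT : g • T = T := ((closure_le (MulAction.stabilizer G T)).2 hA hg :)
  have hg1 := Set.smul_mem_smul_set (a := g) hT
  rwa [hgT, smul_eq_mul, mul_one] at hg1

theorem smul_mul_subset_of_inv_mul_mul_mem {A : Set G} {K : Subgroup G} {x : G}
    (hx : ∀ a ∈ A, ∃ a' ∈ A, a'⁻¹ * x * a ∈ K) : x • (A * K : Set G) ⊆ A * K := by
  rintro _ ⟨_, ⟨a, ha, k, hk, rfl⟩, rfl⟩
  obtain ⟨a', ha', hK⟩ := hx a ha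
  refine ⟨a', ha', a'⁻¹ * x * a * k, K.mul_mem hK hk, ?_⟩
  simp only [smul_eq_mul]
  group

theorem exists_inv_mul_mem_of_mul_eq_univ {A : Set G} {H : Subgroup G}
    (hAH : A * (H : Set G) = Set.univ) (g : G) : ∃ a ∈ A, a⁻¹ * g ∈ H := by
  obtain ⟨a, ha, h, hh, hg⟩ : g ∈ A * (H : Set G) := hAH ▸ Set.mem_univ g
  exact ⟨a, ha, by simpa [← hg] using hh⟩

theorem coe_closure_eq_mul_closure_inter {A S : Set G} {H : Subgroup G}
    (hAH : A * (H : Set G) = Set.univ) (hS : A⁻¹ * (A ∪ A⁻¹) * A ⊆ S)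
    (hSA : S ⊆ closure A) : (closure A : Set G) = A * closure (S ∩ H) := by
  set K := closure (S ∩ (H : Set G))
  have hstable : ∀ x ∈ A ∪ A⁻¹, x • (A * K : Set G) ⊆ A * K := fun x hx ↦
    smul_mul_subset_of_inv_mul_mul_mem fun a ha ↦ by
      obtain ⟨a', ha', hH⟩ := exists_inv_mul_mem_of_mul_eq_univ hAH (x * a)
      refine ⟨a', ha', subset_closure ⟨hS ?_, by rwa [mul_assoc]⟩⟩
      exact Set.mul_mem_mul (Set.mul_mem_mul (Set.inv_mem_inv.2 ha') hx) ha
  have hA : A ⊆ A * K := fun a ha ↦ ⟨a, ha, 1, K.one_mem, mul_one a⟩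
  apply subset_antisymm
  · apply coe_closure_subset_of_smul_eq
    · obtain ⟨a, ha, -⟩ := exists_inv_mul_mem_of_mul_eq_univ hAH 1
      simpa using hstable a⁻¹ (Or.inr (Set.inv_mem_inv.2 ha)) (Set.smul_mem_smul_set (hA ha))
    · intro a ha
      refine (hstable a (Or.inl ha)).antisymm (Set.subset_smul_set_iff.2 ?_)
      exact hstable a⁻¹ (Or.inr (Set.inv_mem_inv.2 ha))
  · have hKA : K ≤ closure A := (closure_le _).2 fun s hs ↦ hSA hs.1
    exact mul_subset subset_closure hKA

end Subgroup

theorem stmt_11 {G : Type*} [Group G] (H : Subgroup G) (A : Set G)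
    (hsurj : A * (H : Set G) = Set.univ) :
    ((Subgroup.closure A : Subgroup G) : Set G) =
      A * ((Subgroup.closure (((A ∪ A⁻¹ ∪ {1} : Set G) ^ 3) ∩ (H : Set G)) : Subgroup G) : Set G) := by
  have hAU : A ⊆ A ∪ A⁻¹ ∪ {1} := fun a ha ↦ Or.inl (Or.inl ha)
  have hAinvU : A⁻¹ ⊆ A ∪ A⁻¹ ∪ {1} := fun a ha ↦ Or.inl (Or.inr ha)
  have hUA : A ∪ A⁻¹ ∪ {1} ⊆ Subgroup.closure A :=
    Set.union_subset (Set.union_subset Subgroup.subset_closure (Subgroup.inv_subset_closure A))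
      (Set.singleton_subset_iff.2 (Subgroup.closure A).one_mem)
  refine Subgroup.coe_closure_eq_mul_closure_inter hsurj ?_ ?_
  · rw [pow_three']
    exact Set.mul_subset_mul (Set.mul_subset_mul hAinvU (Set.union_subset hAU hAinvU)) hAU
  · rw [pow_three']
    exact Subgroup.mul_subset (Subgroup.mul_subset hUA hUA) hUA
end

section
/- Let $H$ be a finite group and $P$ a normal subgroup such that $H/P$ is solvable. If $F \leq H$ is minimal (with respect to inclusion) among subgroups satisfying $PF = H$, then $F$ is solvable. -/
open scoped Pointwise

/-!
Let `N = P ∩ F`, the kernel of `F → H ⧸ P`. If a subgroup `K` of `F` satisfies `N ⊔ K = F`, then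
`P K ⊇ P N K = P F = H`, so `K = F` by minimality. Hence `N` lies in every maximal subgroup of `F`,
i.e. in the Frattini subgroup `Φ(F)`. As `Φ(F)` is nilpotent and `F ⧸ N` embeds into the solvable
group `H ⧸ P`, the group `F` is solvable.
-/

theorem Subgroup.le_frattini_of_forall_sup_eq_top {G : Type*} [Group G] {N : Subgroup G}
    (h : ∀ K : Subgroup G, N ⊔ K = ⊤ → K = ⊤) : N ≤ frattini G :=
  le_iInf₂ fun M hM => by_contra fun hNM => hM.1 (h M (hM.2 _ (right_lt_sup.2 hNM)))

theorem Group.isSolvable_of_ker_le_frattini {G Q : Type*} [Group G] [Finite G] [Group Q]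
    [Group.IsSolvable Q] (f : G →* Q) (hf : f.ker ≤ frattini G) : Group.IsSolvable G :=
  have := frattini_nilpotent (G := G)
  Group.isSolvable_of_ker_le_range (frattini G).subtype f (by rwa [Subgroup.range_subtype])

theorem Subgroup.map_subtype_lt_of_ne_top {G : Type*} [Group G] {F : Subgroup G}
    {K : Subgroup F} (hK : K ≠ ⊤) : K.map F.subtype < F := by
  simpa [← MonoidHom.range_eq_map] using map_subtype_lt_map_subtype.2 (lt_top_iff_ne_top.2 hK)

theorem Subgroup.mul_map_subtype_eq_univ {H : Type*} [Group H] {P F : Subgroup H} [P.Normal]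
    (hPF : (P : Set H) * (F : Set H) = Set.univ) {K : Subgroup F}
    (hK : P.subgroupOf F ⊔ K = ⊤) : (P : Set H) * (K.map F.subtype : Set H) = Set.univ := by
  refine Set.eq_univ_of_forall fun x => ?_
  obtain ⟨p, hp, f, hf, rfl⟩ := hPF.symm ▸ Set.mem_univ x
  have hfK : (⟨f, hf⟩ : F) ∈ ((P.subgroupOf F ⊔ K : Subgroup F) : Set F) := by simp [hK]
  rw [normal_mul] at hfK
  obtain ⟨n, hn, k, hk, hnk⟩ := hfK
  refine ⟨p * n, P.mul_mem hp hn, k, ⟨k, hk, rfl⟩, ?_⟩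
  simp only [mul_assoc, ← coe_mul, hnk]

theorem stmt_17 {H : Type*} [Group H] [Finite H] (P : Subgroup H) [P.Normal]
    (hsolv : IsSolvable (H ⧸ P)) (F : Subgroup H)
    (hPF : (P : Set H) * (F : Set H) = Set.univ)
    (hmin : ∀ F' : Subgroup H, F' < F → (P : Set H) * (F' : Set H) ≠ Set.univ) :
    IsSolvable F := by
  have hfrattini : P.subgroupOf F ≤ frattini F :=
    Subgroup.le_frattini_of_forall_sup_eq_top fun K hK => by_contra fun hK_ne =>
      hmin _ (Subgroup.map_subtype_lt_of_ne_top hK_ne) (Subgroup.mul_map_subtype_eq_univ hPF hK)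
  have : Group.IsSolvable (H ⧸ P) := hsolv
  refine Group.isSolvable_of_ker_le_frattini ((QuotientGroup.mk' P).comp F.subtype) ?_
  rwa [← MonoidHom.comap_ker, QuotientGroup.ker_mk', Subgroup.comap_subtype]
end
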